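/- arXiv:2604.00190 — 2 statements merged into one kernel-verified Lean document; each statement's English description precedes it below -/
import Mathlib

section
/- Let f : ℝ → ℝ be concave. For z ≥ 0 define g(l) = l + f(z − l) on [0, z]. Let b̲ = sup{x ≥ 0 : f′₊(x) > 1} (with sup ∅ = 0) and b̄ = inf{x ≥ 0 : f′₊(x) < 1} (with inf ∅ = ∞), where f′₊ denotes the right derivative. Then for every b with b̲ ≤ b ≤ b̄, the point l* = (z − b) ∨ 0 maximizes g over [0, z], i.e. g((z − b) ∨ 0) ≥ g(l) for all l ∈ [0, z]. -/
open Set Filter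

/-- For a concave function with right derivative `f'`, the slope of a secant with right
endpoint `t` is at least `f' t`. -/
lemma aux_deriv_le_slope (f : ℝ → ℝ) (hf : ConcaveOn ℝ univ f)
    (f' : ℝ → ℝ) (hf' : ∀ x, HasDerivWithinAt f (f' x) (Ici x) x)
    {y t : ℝ} (hyt : y < t) : f' t ≤ slope f y t := by
  have hd : HasDerivWithinAt f (f' t) (Ioi t) t := (hf' t).mono Ioi_subset_Ici_self
  apply le_of_tendsto ((hasDerivWithinAt_iff_tendsto_slope' notMem_Ioi_self).mp hd)
  filter_upwards [self_mem_nhdsWithin] with u (hu : t < u)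
  have h := hf.slope_anti (mem_univ t) (a := y) (b := u)
    ⟨mem_univ y, hyt.ne⟩ ⟨mem_univ u, hu.ne'⟩ (hyt.le.trans hu.le)
  calc slope f t u ≤ slope f t y := h
    _ = slope f y t := slope_comm f t y

/-- For concave `f` with right derivative `f'`, any `b` between
`b̲ = sup{x ≥ 0 : f' x > 1}` (sup ∅ = 0) and `b̄ = inf{x ≥ 0 : f' x < 1}` (inf ∅ = ∞)
yields a maximizer `l* = (z - b) ∨ 0` of `g l = l + f (z - l)` on `[0, z]`. -/
theorem stmt0 (f : ℝ → ℝ) (hf : ConcaveOn ℝ univ f)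
    (f' : ℝ → ℝ) (hf' : ∀ x, HasDerivWithinAt f (f' x) (Ici x) x)
    (z : ℝ) (hz : 0 ≤ z)
    (b : ℝ) (hb0 : 0 ≤ b)
    (hlow : ∀ x, 0 ≤ x → 1 < f' x → x ≤ b)
    (hup : ∀ x, 0 ≤ x → f' x < 1 → b ≤ x) :
    ∀ l ∈ Icc (0:ℝ) z, l + f (z - l) ≤ max (z - b) 0 + f (z - max (z - b) 0) := by
  have hcont : Continuous f := by
    rw [← continuousOn_univ]
    exact hf.continuousOn isOpen_univ
  set x0 : ℝ := min b z with hx0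
  have hx00 : 0 ≤ x0 := le_min hb0 hz
  have hx0b : x0 ≤ b := min_le_left _ _
  -- key claim : for 0 ≤ y ≤ z, f y ≤ f x0 + (y - x0)
  have claim : ∀ y : ℝ, 0 ≤ y → y ≤ z → f y ≤ f x0 + (y - x0) := by
    intro y hy0 hyz
    rcases lt_trichotomy y x0 with hlt | heq | hgt
    · -- y < x0 : derivative ≥ 1 on (y, x0)
      have hstep : ∀ t ∈ Ioo y x0, f y ≤ f t - (t - y) := by
        rintro t ⟨hty, htx⟩
        have ht0 : 0 ≤ t := le_of_lt (lt_of_le_of_lt hy0 hty)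
        have h1 : (1:ℝ) ≤ f' t := by
          by_contra h
          exact absurd (hup t ht0 (lt_of_not_ge h)) (not_le.mpr (lt_of_lt_of_le htx hx0b))
        have h2 : f' t ≤ slope f y t := aux_deriv_le_slope f hf f' hf' hty
        rw [slope_def_field] at h2
        have h3 : (1:ℝ) ≤ (f t - f y) / (t - y) := h1.trans h2
        rw [le_div_iff₀ (by linarith)] at h3
        linarith
      have htend : Tendsto (fun t => f t - (t - y)) (nhdsWithin x0 (Iio x0))
          (nhds (f x0 - (x0 - y))) :=
        (((hcont.tendsto x0).sub ((continuous_id.sub continuous_const).tendsto x0))).mono_left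
          nhdsWithin_le_nhds
      have hev : ∀ᶠ t in nhdsWithin x0 (Iio x0), f y ≤ f t - (t - y) := by
        filter_upwards [Ioo_mem_nhdsLT_of_mem ⟨hlt, le_refl x0⟩] with t ht
        exact hstep t ht
      have := ge_of_tendsto htend hev
      linarith
    · rw [heq]; linarith
    · -- y > x0 : then x0 = b and derivative ≤ 1 on (b, y)
      have hbz : b ≤ z := by
        by_contra h
        have : x0 = z := min_eq_right (le_of_lt (lt_of_not_ge h))
        linarith
      have hx0eq : x0 = b := min_eq_left hbz
      rw [hx0eq] at hgt ⊢
      have hstep : ∀ t ∈ Ioo b y, f y ≤ f t + (y - t) := by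
        rintro t ⟨htb, hty⟩
        have ht0 : 0 ≤ t := hb0.trans htb.le
        have h1 : f' t ≤ 1 := by
          by_contra h
          exact absurd (hlow t ht0 (lt_of_not_ge h)) (not_le.mpr htb)
        have h2 : slope f t y ≤ f' t := by
          have hd : HasDerivWithinAt f (f' t) (Ioi t) t := (hf' t).mono Ioi_subset_Ici_self
          exact hf.slope_le_of_hasDerivWithinAt_Ioi (mem_univ t) (mem_univ y) hty hd
        have h3 : (f y - f t) / (y - t) ≤ 1 := by
          rw [slope_def_field] at h2; exact h2.trans h1
        rw [div_le_one (by linarith)] at h3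
        linarith
      have htend : Tendsto (fun t => f t + (y - t)) (nhdsWithin b (Ioi b))
          (nhds (f b + (y - b))) :=
        (((hcont.tendsto b).add ((continuous_const.sub continuous_id).tendsto b))).mono_left
          nhdsWithin_le_nhds
      have hev : ∀ᶠ t in nhdsWithin b (Ioi b), f y ≤ f t + (y - t) := by
        filter_upwards [Ioo_mem_nhdsGT_of_mem ⟨le_refl b, hgt⟩] with t ht
        exact hstep t ht
      have := ge_of_tendsto htend hev
      linarith
  -- Convert goal using z - max (z-b) 0 = min b z
  have hM : z - max (z - b) 0 = x0 := by
    rcases le_total b z with h | h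
    · rw [hx0, max_eq_left (by linarith), min_eq_left h]; ring
    · rw [hx0, max_eq_right (by linarith), min_eq_right h]; ring
  intro l ⟨hl0, hlz⟩
  rw [hM]
  have hMax : max (z - b) 0 = z - x0 := by linarith
  rw [hMax]
  have := claim (z - l) (by linarith) (by linarith)
  linarith
end

section
/- Let ρ : [0, ∞) → ℝ be nonincreasing and left-continuous with ρ(0) ≥ 1 and lim_{x → ∞} ρ(x) < 1. Define ρ⁺(x) = lim_{z ↓ x} ρ(z) (the right limit, which exists by monotonicity), b̄ = sup{x ≥ 0 : ρ(x) ≥ 1} and b̲ = inf{x ≥ 0 : ρ⁺(x) ≤ 1}. Then b̲ ≤ b̄ < ∞ and {x ≥ 0 : ρ⁺(x) ≤ 1 and ρ(x) ≥ 1} = [b̲, b̄]. -/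
/-!
Every `x > b̄` has `ρ x < 1`, so `ρ⁺(b̄) ≤ 1`; hence `b̲ ≤ b̄`. The set `{ρ⁺ ≤ 1}` is upward
closed because `ρ⁺(a) ≥ ρ(z)` for `a < z`, and `{ρ ≥ 1}` contains `[0, b̄)` by monotonicity and
also `b̄` itself by left continuity.
-/

open Set Filter Topology

lemma AntitoneOn.le_of_tendsto_nhdsGT {α β : Type*} [LinearOrder α] [TopologicalSpace α]
    [OrderTopology α] [DenselyOrdered α] [LinearOrder β] [TopologicalSpace β] [ClosedIciTopology β]
    {f : α → β} {a z : α} {l : β} (hf : AntitoneOn f (Ici a)) (hl : Tendsto f (𝓝[>] a) (𝓝 l))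
    (hz : a < z) : f z ≤ l :=
  have : (𝓝[>] a).NeBot := nhdsGT_neBot_of_exists_gt ⟨z, hz⟩
  ge_of_tendsto hl <| by
    filter_upwards [Ioo_mem_nhdsGT hz] with w hw
    exact hf hw.1.le hz.le hw.2.le

section Levels

variable {ρ ρp : ℝ → ℝ} {c : ℝ}

lemma bddAbove_setOf_le_of_eventually_lt (hM : ∃ M : ℝ, ∀ x ≥ M, ρ x < c) :
    BddAbove {x : ℝ | 0 ≤ x ∧ c ≤ ρ x} := by
  obtain ⟨M, hM⟩ := hM
  exact ⟨M, fun x hx => not_lt.1 fun hMx => (hM x hMx.le).not_ge hx.2⟩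

lemma rightLim_sSup_setOf_le (hbdd : BddAbove {x : ℝ | 0 ≤ x ∧ c ≤ ρ x})
    (hρp : Tendsto ρ (𝓝[>] sSup {x : ℝ | 0 ≤ x ∧ c ≤ ρ x})
      (𝓝 (ρp (sSup {x : ℝ | 0 ≤ x ∧ c ≤ ρ x})))) (h0 : c ≤ ρ 0) :
    ρp (sSup {x : ℝ | 0 ≤ x ∧ c ≤ ρ x}) ≤ c := by
  have hsup : 0 ≤ sSup {x : ℝ | 0 ≤ x ∧ c ≤ ρ x} := le_csSup hbdd ⟨le_rfl, h0⟩
  refine le_of_tendsto hρp (eventually_nhdsWithin_of_forall fun z hz => ?_)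
  by_contra! hcz
  exact (notMem_of_csSup_lt hz hbdd) ⟨hsup.trans hz.le, hcz.le⟩

lemma rightLim_le_of_sInf_le (hmono : AntitoneOn ρ (Ici 0))
    (hρp : ∀ x ≥ (0:ℝ), Tendsto ρ (𝓝[>] x) (𝓝 (ρp x)))
    (hne : {x : ℝ | 0 ≤ x ∧ ρp x ≤ c}.Nonempty) {x : ℝ}
    (hx : sInf {x : ℝ | 0 ≤ x ∧ ρp x ≤ c} ≤ x) : ρp x ≤ c := by
  have hx0 : 0 ≤ x := (le_csInf hne fun _ ha => ha.1).trans hx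
  refine le_of_tendsto (hρp x hx0) (eventually_nhdsWithin_of_forall fun z hz => ?_)
  obtain ⟨a, ⟨ha0, hac⟩, haz⟩ := exists_lt_of_csInf_lt hne (hx.trans_lt hz)
  exact ((hmono.mono (Ici_subset_Ici.2 ha0)).le_of_tendsto_nhdsGT (hρp a ha0) haz).trans hac

lemma le_of_lt_sSup_setOf_le (hmono : AntitoneOn ρ (Ici 0)) (h0 : c ≤ ρ 0) {x : ℝ}
    (hx0 : 0 ≤ x) (hx : x < sSup {x : ℝ | 0 ≤ x ∧ c ≤ ρ x}) : c ≤ ρ x := by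
  have hne : {x : ℝ | 0 ≤ x ∧ c ≤ ρ x}.Nonempty := ⟨0, le_rfl, h0⟩
  obtain ⟨b, ⟨hb0, hbc⟩, hxb⟩ := exists_lt_of_lt_csSup hne hx
  exact hbc.trans (hmono hx0 hb0 hxb.le)

lemma le_of_le_sSup_setOf_le (hmono : AntitoneOn ρ (Ici 0))
    (hlc : ∀ x > (0:ℝ), ContinuousWithinAt ρ (Iic x) x) (h0 : c ≤ ρ 0) {x : ℝ}
    (hx0 : 0 ≤ x) (hx : x ≤ sSup {x : ℝ | 0 ≤ x ∧ c ≤ ρ x}) : c ≤ ρ x := by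
  rcases hx.lt_or_eq with hlt | rfl
  · exact le_of_lt_sSup_setOf_le hmono h0 hx0 hlt
  rcases hx0.eq_or_lt with hzero | hpos
  · rwa [← hzero]
  have hleft : Tendsto ρ (𝓝[<] _) (𝓝 _) :=
    (hlc _ hpos).tendsto.mono_left (nhdsWithin_mono _ Iio_subset_Iic_self)
  refine ge_of_tendsto hleft ?_
  filter_upwards [Ioo_mem_nhdsLT hpos] with w hw
  exact le_of_lt_sSup_setOf_le hmono h0 hw.1.le hw.2

end Levels

/-- For a nonincreasing, left-continuous `ρ` on `[0,∞)` with `ρ 0 ≥ 1` and `ρ < 1`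
eventually, with `ρp` its right-limit function, the set
`{x ≥ 0 : ρp x ≤ 1 and ρ x ≥ 1}` equals the interval
`[inf{x ≥ 0 : ρp x ≤ 1}, sup{x ≥ 0 : ρ x ≥ 1}]`, and this interval is nonempty. -/
theorem stmt6 (ρ ρp : ℝ → ℝ)
    (hmono : AntitoneOn ρ (Ici 0))
    (hlc : ∀ x > (0:ℝ), ContinuousWithinAt ρ (Iic x) x)
    (h0 : 1 ≤ ρ 0)
    (hM : ∃ M : ℝ, ∀ x ≥ M, ρ x < 1)
    (hρp : ∀ x ≥ (0:ℝ), Filter.Tendsto ρ (nhdsWithin x (Ioi x)) (nhds (ρp x))) :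
    sInf {x : ℝ | 0 ≤ x ∧ ρp x ≤ 1} ≤ sSup {x : ℝ | 0 ≤ x ∧ 1 ≤ ρ x} ∧
    {x : ℝ | 0 ≤ x ∧ ρp x ≤ 1 ∧ 1 ≤ ρ x} =
      Icc (sInf {x : ℝ | 0 ≤ x ∧ ρp x ≤ 1}) (sSup {x : ℝ | 0 ≤ x ∧ 1 ≤ ρ x}) := by
  set A := {x : ℝ | 0 ≤ x ∧ ρp x ≤ 1}
  set B := {x : ℝ | 0 ≤ x ∧ 1 ≤ ρ x}
  have hB : BddAbove B := bddAbove_setOf_le_of_eventually_lt hM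
  have hA : BddBelow A := ⟨0, fun _ ha => ha.1⟩
  have hsupB0 : 0 ≤ sSup B := le_csSup hB ⟨le_rfl, h0⟩
  have hsupA : sSup B ∈ A := ⟨hsupB0, rightLim_sSup_setOf_le hB (hρp _ hsupB0) h0⟩
  refine ⟨csInf_le hA hsupA, Subset.antisymm ?_ ?_⟩
  · rintro x ⟨hx0, hxA, hxB⟩
    exact ⟨csInf_le hA ⟨hx0, hxA⟩, le_csSup hB ⟨hx0, hxB⟩⟩
  · rintro x ⟨hAx, hxB⟩
    have hx0 : 0 ≤ x := (le_csInf ⟨_, hsupA⟩ fun _ ha => ha.1).trans hAx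
    exact ⟨hx0, rightLim_le_of_sInf_le hmono hρp ⟨_, hsupA⟩ hAx,
      le_of_le_sSup_setOf_le hmono hlc h0 hx0 hxB⟩
end
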